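/- arXiv:1310.8502 — 2 statements merged into one kernel-verified Lean document; each statement's English description precedes it below -/
import Mathlib

section
/- Mehler-type kernel estimate: for 0 < r < 1, 0 < |α| < π, and x, y ∈ ℝ^N, setting a_r = Re((1+r²e^{2iα})/(1−r²e^{2iα})) and b_r = Re(2re^{iα}/(1−r²e^{2iα})), one has a_r = (1−r⁴)/((1+r⁴)−2r²cos 2α) > 0 and b_r = 2(r−r³)cos α /(1+r⁴−2r²cos 2α), and consequently sup_{s≥0}(−a_r s² + |b_r| |x| s) = b_r² |x|²/(4 a_r) ≤ 2r²(1−r²)cos²α |x|² / ((r⁴ − 2r² cos 2α + 1)(r²+1)). -/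
/-!
With `w = r² e^{2iα}`, the Cayley-transform identity `Re((1 + w)/(1 - w)) = (1 - |w|²)/|1 - w|²`
and `|1 - w|² = 1 + r⁴ - 2r² cos 2α ≥ (1 - r²)² > 0` give `a_r`; multiplying by the conjugate of
the denominator gives `b_r`. The supremum is that of a concave quadratic in `s`, attained at
`s = |b_r| |x| / (2 a_r)`, and its value `b_r² |x|² / (4 a_r)` simplifies to
`r² (1 - r²) cos² α |x|² / ((1 + r⁴ - 2r² cos 2α)(1 + r²))`, half the stated bound.
-/

open Complex

theorem Complex.normSq_one_sub_ofReal_mul_exp (ρ θ : ℝ) :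
    normSq (1 - ρ * exp (θ * I)) = 1 + ρ ^ 2 - 2 * ρ * Real.cos θ := by
  rw [normSq_apply]
  simp [exp_ofReal_mul_I_re, exp_ofReal_mul_I_im]
  linear_combination ρ ^ 2 * Real.sin_sq_add_cos_sq θ

theorem one_sub_sq_le_one_add_sq_sub_two_mul_cos {ρ : ℝ} (hρ : 0 ≤ ρ) (θ : ℝ) :
    (1 - ρ) ^ 2 ≤ 1 + ρ ^ 2 - 2 * ρ * Real.cos θ := by
  nlinarith [mul_le_mul_of_nonneg_left (Real.cos_le_one θ) hρ]

theorem Complex.re_one_add_div_one_sub (w : ℂ) :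
    ((1 + w) / (1 - w)).re = (1 - normSq w) / normSq (1 - w) := by
  rw [div_re, ← add_div, normSq_apply w]
  congr 1
  simp
  ring

theorem Complex.re_one_add_mul_exp_div_one_sub_mul_exp (ρ θ : ℝ) :
    ((1 + ρ * exp (θ * I)) / (1 - ρ * exp (θ * I))).re =
      (1 - ρ ^ 2) / (1 + ρ ^ 2 - 2 * ρ * Real.cos θ) := by
  rw [re_one_add_div_one_sub, normSq_one_sub_ofReal_mul_exp, normSq_mul, normSq_ofReal,
    normSq_eq_norm_sq (exp _), norm_exp_ofReal_mul_I]
  ring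

theorem Complex.re_mul_exp_div_one_sub_mul_exp_two_mul (s t θ : ℝ) :
    (s * exp (θ * I) / (1 - t * exp (2 * θ * I))).re =
      s * (1 - t) * Real.cos θ / (1 + t ^ 2 - 2 * t * Real.cos (2 * θ)) := by
  have hnormSq := normSq_one_sub_ofReal_mul_exp t (2 * θ)
  push_cast at hnormSq
  rw [div_re, ← add_div, hnormSq]
  congr 1
  have hcast : 2 * (θ : ℂ) * I = ((2 * θ : ℝ) : ℂ) * I := by push_cast; ring
  simp only [hcast, mul_re, mul_im, sub_re, sub_im, one_re, one_im, ofReal_re, ofReal_im,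
    exp_ofReal_mul_I_re, exp_ofReal_mul_I_im, Real.cos_two_mul, Real.sin_two_mul]
  linear_combination -2 * s * t * Real.cos θ * Real.sin_sq_add_cos_sq θ

theorem isGreatest_neg_mul_sq_add_mul {a c : ℝ} (ha : 0 < a) (hc : 0 ≤ c) :
    IsGreatest {v : ℝ | ∃ s : ℝ, 0 ≤ s ∧ v = -a * s ^ 2 + c * s} (c ^ 2 / (4 * a)) := by
  refine ⟨⟨c / (2 * a), by positivity, by field_simp; ring⟩, ?_⟩
  rintro v ⟨s, -, rfl⟩
  rw [le_div_iff₀ (by positivity)]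
  nlinarith [sq_nonneg (2 * a * s - c)]

theorem mehler_kernel_estimate_general (N : ℕ) (r α : ℝ) (hr0 : 0 < r) (hr1 : r < 1)
    (x : EuclideanSpace ℝ (Fin N))
    (a b : ℝ)
    (ha : a = ((1 + (r : ℂ) ^ 2 * Complex.exp (2 * α * Complex.I)) /
      (1 - (r : ℂ) ^ 2 * Complex.exp (2 * α * Complex.I))).re)
    (hb : b = (2 * (r : ℂ) * Complex.exp (α * Complex.I) /
      (1 - (r : ℂ) ^ 2 * Complex.exp (2 * α * Complex.I))).re) :
    a = (1 - r ^ 4) / ((1 + r ^ 4) - 2 * r ^ 2 * Real.cos (2 * α)) ∧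
    0 < a ∧
    b = 2 * (r - r ^ 3) * Real.cos α / (1 + r ^ 4 - 2 * r ^ 2 * Real.cos (2 * α)) ∧
    IsGreatest {v : ℝ | ∃ s : ℝ, 0 ≤ s ∧ v = -a * s ^ 2 + |b| * ‖x‖ * s}
      (b ^ 2 * ‖x‖ ^ 2 / (4 * a)) ∧
    b ^ 2 * ‖x‖ ^ 2 / (4 * a) ≤
      2 * r ^ 2 * (1 - r ^ 2) * Real.cos α ^ 2 * ‖x‖ ^ 2 /
        ((r ^ 4 - 2 * r ^ 2 * Real.cos (2 * α) + 1) * (r ^ 2 + 1)) := by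
  have hr2 : 0 < 1 - r ^ 2 := by nlinarith
  have hr4 : 0 < 1 - r ^ 4 := by nlinarith
  have hD : 0 < 1 + r ^ 4 - 2 * r ^ 2 * Real.cos (2 * α) := by
    nlinarith [one_sub_sq_le_one_add_sq_sub_two_mul_cos (sq_nonneg r) (2 * α), pow_pos hr2 2]
  have ha' : a = (1 - r ^ 4) / (1 + r ^ 4 - 2 * r ^ 2 * Real.cos (2 * α)) := by
    have h := re_one_add_mul_exp_div_one_sub_mul_exp (r ^ 2) (2 * α)
    push_cast at h
    rw [ha, h]
    ring
  have hb' : b = 2 * (r - r ^ 3) * Real.cos α / (1 + r ^ 4 - 2 * r ^ 2 * Real.cos (2 * α)) := by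
    have h := re_mul_exp_div_one_sub_mul_exp_two_mul (2 * r) (r ^ 2) α
    push_cast at h
    rw [hb, h]
    ring
  have ha0 : 0 < a := ha' ▸ div_pos hr4 hD
  have hmax : b ^ 2 * ‖x‖ ^ 2 / (4 * a) =
      r ^ 2 * (1 - r ^ 2) * Real.cos α ^ 2 * ‖x‖ ^ 2 /
        ((1 + r ^ 4 - 2 * r ^ 2 * Real.cos (2 * α)) * (r ^ 2 + 1)) := by
    rw [ha', hb']
    field_simp
    ring
  refine ⟨ha', ha0, hb', ?_, ?_⟩
  · simpa [mul_pow] using isGreatest_neg_mul_sq_add_mul ha0 (by positivity : 0 ≤ |b| * ‖x‖)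
  · have hnum : 0 ≤ r ^ 2 * (1 - r ^ 2) * Real.cos α ^ 2 * ‖x‖ ^ 2 := by
      have := hr2.le
      positivity
    rw [hmax, show r ^ 4 - 2 * r ^ 2 * Real.cos (2 * α) + 1 =
      1 + r ^ 4 - 2 * r ^ 2 * Real.cos (2 * α) by ring]
    gcongr ?_ / _
    linarith

/-- Mehler-type kernel estimate: explicit formulas for
`a_r = Re((1+r²e^{2iα})/(1-r²e^{2iα}))` and `b_r = Re(2re^{iα}/(1-r²e^{2iα}))`,
positivity of `a_r`, and the value and bound of `sup_{s≥0}(-a_r s² + |b_r| |x| s)`. -/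
theorem mehler_kernel_estimate (N : ℕ) (r α : ℝ) (hr0 : 0 < r) (hr1 : r < 1)
    (hα0 : 0 < |α|) (hαπ : |α| < Real.pi) (x : EuclideanSpace ℝ (Fin N))
    (a b : ℝ)
    (ha : a = ((1 + (r : ℂ) ^ 2 * Complex.exp (2 * α * Complex.I)) /
      (1 - (r : ℂ) ^ 2 * Complex.exp (2 * α * Complex.I))).re)
    (hb : b = (2 * (r : ℂ) * Complex.exp (α * Complex.I) /
      (1 - (r : ℂ) ^ 2 * Complex.exp (2 * α * Complex.I))).re) :
    a = (1 - r ^ 4) / ((1 + r ^ 4) - 2 * r ^ 2 * Real.cos (2 * α)) ∧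
    0 < a ∧
    b = 2 * (r - r ^ 3) * Real.cos α / (1 + r ^ 4 - 2 * r ^ 2 * Real.cos (2 * α)) ∧
    IsGreatest {v : ℝ | ∃ s : ℝ, 0 ≤ s ∧ v = -a * s ^ 2 + |b| * ‖x‖ * s}
      (b ^ 2 * ‖x‖ ^ 2 / (4 * a)) ∧
    b ^ 2 * ‖x‖ ^ 2 / (4 * a) ≤
      2 * r ^ 2 * (1 - r ^ 2) * Real.cos α ^ 2 * ‖x‖ ^ 2 /
        ((r ^ 4 - 2 * r ^ 2 * Real.cos (2 * α) + 1) * (r ^ 2 + 1)) :=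
  mehler_kernel_estimate_general N r α hr0 hr1 x a b ha hb
end

section
/- Laplace-type integral evaluation underlying the master formula: for complex ω with Re ω > 0 and a polynomial p on ℝ^N homogeneous of degree n, if for all x ∈ ℂ^N one has c ∫_{ℝ^N} p(y) K(x, 2y) e^{−|y|²} w(y) dy = e^{l(x)} (e^{Δ/4} p)(x), where l(x) = ∑_j x_j², then for all x ∈ ℂ^N, c ∫_{ℝ^N} p(y) K(x, 2y) e^{−ω|y|²} w(y) dy = ω^{−(γ + n + N/2)} e^{l(x)/ω} (e^{(ω/4)Δ} p)(x). Here one uses the rescaling identity (e^{Δ/4} p)(x/√ω) = ω^{−n/2} (e^{(ω/4)Δ} p)(x) valid for operators Δ homogeneous of degree −2 on polynomials, and the homogeneity w(λy) = λ^{2γ} w(y). -/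
/-! For real `ω = t²` the claim is the `ω = 1` identity after the substitution `y ↦ y / t`:
homogeneity of `p` and `w` and the relation `K(λx, y) = K(x, λy)` move the scaling onto `x`, and
since `Δ` lowers degrees by two, `(e^{Δ/4} p)(x / t) = t^{-n} (e^{(t²/4)Δ} p)(x)`. Both sides are
holomorphic in `ω` on the half-plane where the integrand is integrable, so the identity theorem
carries the equality from the positive reals to that half-plane, and continuity to its boundary.
Where the integrand is not integrable the integral is `0` by convention, and so is the right-hand
side. -/

open MvPolynomial MeasureTheory Filter Set Topology

section LaplaceIntegral

variable {α : Type*} [MeasurableSpace α] {μ : Measure α} {φ : α → ℝ} {g : α → ℂ}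

lemma norm_mul_cexp_neg_mul_ofReal (a s : ℂ) (t : ℝ) :
    ‖a * Complex.exp (-s * t)‖ = ‖a‖ * Real.exp (-s.re * t) := by
  rw [norm_mul, Complex.norm_exp]
  simp

lemma norm_mul_cexp_le_of_re_le (a : ℂ) {t : ℝ} (ht : 0 ≤ t) {ω s : ℂ} (hs : ω.re ≤ s.re) :
    ‖a * Complex.exp (-s * t)‖ ≤ ‖a * Complex.exp (-ω * t)‖ := by
  simp only [norm_mul_cexp_neg_mul_ofReal]
  gcongr

lemma Real.mul_exp_neg_mul_le_inv {δ : ℝ} (hδ : 0 < δ) (t : ℝ) : t * Real.exp (-(δ * t)) ≤ δ⁻¹ :=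
  calc t * Real.exp (-(δ * t)) = δ⁻¹ * (δ * t * Real.exp (-(δ * t))) := by field_simp
    _ ≤ δ⁻¹ * 1 := by
      gcongr
      exact (Real.mul_exp_neg_le_exp_neg_one _).trans (Real.exp_le_one_iff.2 (by norm_num))
    _ = δ⁻¹ := mul_one _

lemma norm_mul_cexp_mul_le_of_re_add_le (a : ℂ) {t δ : ℝ} (ht : 0 ≤ t) (hδ : 0 < δ) {ω s : ℂ}
    (hs : ω.re + δ ≤ s.re) :
    ‖a * Complex.exp (-s * t)‖ * t ≤ δ⁻¹ * ‖a * Complex.exp (-ω * t)‖ := by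
  simp only [norm_mul_cexp_neg_mul_ofReal]
  calc ‖a‖ * Real.exp (-s.re * t) * t
      ≤ ‖a‖ * Real.exp (-(ω.re + δ) * t) * t := by gcongr
    _ = ‖a‖ * Real.exp (-ω.re * t) * (t * Real.exp (-(δ * t))) := by
      rw [neg_add, add_mul, Real.exp_add]; ring_nf
    _ ≤ ‖a‖ * Real.exp (-ω.re * t) * δ⁻¹ := by
      gcongr
      exact Real.mul_exp_neg_mul_le_inv hδ t
    _ = δ⁻¹ * (‖a‖ * Real.exp (-ω.re * t)) := mul_comm _ _

lemma aestronglyMeasurable_of_integrable_mul_cexp (hφm : Measurable φ) {ω : ℂ}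
    (hI : Integrable (fun y => g y * Complex.exp (-ω * φ y)) μ) : AEStronglyMeasurable g μ := by
  have hg : g = fun y => g y * Complex.exp (-ω * φ y) * Complex.exp (ω * φ y) := by
    funext y
    rw [mul_assoc, ← Complex.exp_add]
    simp
  rw [hg]
  exact hI.aestronglyMeasurable.mul
    (by fun_prop : Measurable fun y => Complex.exp (ω * φ y)).aestronglyMeasurable

lemma integrable_mul_cexp_of_re_le (hφm : Measurable φ) (hφ : ∀ y, 0 ≤ φ y) {ω s : ℂ}
    (hI : Integrable (fun y => g y * Complex.exp (-ω * φ y)) μ) (hs : ω.re ≤ s.re) :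
    Integrable (fun y => g y * Complex.exp (-s * φ y)) μ :=
  hI.mono ((aestronglyMeasurable_of_integrable_mul_cexp hφm hI).mul
      (by fun_prop : Measurable fun y => Complex.exp (-s * φ y)).aestronglyMeasurable)
    (ae_of_all _ fun y => norm_mul_cexp_le_of_re_le _ (hφ y) hs)

lemma continuousOn_integral_mul_cexp (hφm : Measurable φ) (hφ : ∀ y, 0 ≤ φ y) {ω : ℂ}
    (hI : Integrable (fun y => g y * Complex.exp (-ω * φ y)) μ) :
    ContinuousOn (fun s => ∫ y, g y * Complex.exp (-s * φ y) ∂μ) {s | ω.re ≤ s.re} :=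
  continuousOn_of_dominated
    (fun _ hs => (integrable_mul_cexp_of_re_le hφm hφ hI hs).aestronglyMeasurable)
    (fun _ hs => ae_of_all _ fun y => norm_mul_cexp_le_of_re_le _ (hφ y) hs) hI.norm
    (ae_of_all _ fun _ => by fun_prop)

lemma differentiableOn_integral_mul_cexp (hφm : Measurable φ) (hφ : ∀ y, 0 ≤ φ y) {ω : ℂ}
    (hI : Integrable (fun y => g y * Complex.exp (-ω * φ y)) μ) :
    DifferentiableOn ℂ (fun s => ∫ y, g y * Complex.exp (-s * φ y) ∂μ) {s | ω.re < s.re} := by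
  intro s₀ (hs₀ : ω.re < s₀.re)
  set δ := (s₀.re - ω.re) / 2
  have hδ : 0 < δ := by simp only [δ]; linarith
  have hball : ∀ s ∈ Metric.ball s₀ δ, ω.re + δ ≤ s.re := fun s hs => by
    have := (abs_le.1 ((Complex.abs_re_le_norm (s - s₀)).trans (mem_ball_iff_norm.1 hs).le)).1
    simp only [Complex.sub_re, δ] at this ⊢
    linarith
  have hg := aestronglyMeasurable_of_integrable_mul_cexp hφm hI
  refine (hasDerivAt_integral_of_dominated_loc_of_deriv_le (Metric.ball_mem_nhds s₀ hδ)
    (F' := fun s y => g y * Complex.exp (-s * φ y) * (-φ y))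
    (bound := fun y => δ⁻¹ * ‖g y * Complex.exp (-ω * φ y)‖)
    (Eventually.of_forall fun s => hg.mul (by fun_prop : Measurable fun y =>
      Complex.exp (-s * φ y)).aestronglyMeasurable)
    (integrable_mul_cexp_of_re_le hφm hφ hI hs₀.le)
    (hg.mul (by fun_prop : Measurable fun y =>
      Complex.exp (-s₀ * φ y) * (-φ y : ℂ)).aestronglyMeasurable |>.congr
      (ae_of_all _ fun y => (mul_assoc _ _ _).symm))
    (ae_of_all _ fun y s hs => ?_) (hI.norm.const_mul δ⁻¹)
    (ae_of_all _ fun y s _ => ?_)).2.differentiableAt.differentiableWithinAt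
  · rw [norm_mul, norm_neg, Complex.norm_real, Real.norm_of_nonneg (hφ y)]
    exact norm_mul_cexp_mul_le_of_re_add_le _ (hφ y) hδ (hball s hs)
  · simpa [mul_assoc] using ((hasDerivAt_neg s).mul_const (φ y : ℂ)).cexp.const_mul (g y)

lemma eqOn_of_eventuallyEq_ofReal {F G : ℂ → ℂ} {U : Set ℂ} (hU : IsOpen U)
    (hUc : IsPreconnected U) (hF : DifferentiableOn ℂ F U) (hG : DifferentiableOn ℂ G U)
    {a₀ : ℝ} (ha₀ : (a₀ : ℂ) ∈ U) (h : ∀ᶠ a : ℝ in 𝓝 a₀, F a = G a) : EqOn F G U := by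
  have hmaps : Tendsto ((↑) : ℝ → ℂ) (𝓝[≠] a₀) (𝓝[≠] (a₀ : ℂ)) :=
    Complex.continuous_ofReal.continuousWithinAt.tendsto_nhdsWithin
      fun _ ha => Complex.ofReal_injective.ne ha
  exact (hF.analyticOnNhd hU).eqOn_of_preconnected_of_frequently_eq (hG.analyticOnNhd hU) hUc ha₀
    (hmaps.frequently (h.filter_mono nhdsWithin_le_nhds).frequently)

theorem integral_mul_cexp_eq_of_eq_ofReal (hφm : Measurable φ) (hφ : ∀ y, 0 ≤ φ y) {G : ℂ → ℂ}
    (hG : DifferentiableOn ℂ G {z | 0 < z.re})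
    (h : ∀ a : ℝ, 0 < a → ∫ y, g y * Complex.exp (-a * φ y) ∂μ = G a)
    {ω : ℂ} (hω : 0 < ω.re) : ∫ y, g y * Complex.exp (-ω * φ y) ∂μ = G ω := by
  by_cases hI : Integrable (fun y => g y * Complex.exp (-ω * φ y)) μ
  · have hsub : {s : ℂ | ω.re ≤ s.re} ⊆ {z | 0 < z.re} := fun s (hs : ω.re ≤ s.re) =>
      show 0 < s.re from hω.trans_le hs
    have hopen : EqOn (fun s => ∫ y, g y * Complex.exp (-s * φ y) ∂μ) G {s | ω.re < s.re} :=
      eqOn_of_eventuallyEq_ofReal (isOpen_lt continuous_const Complex.continuous_re)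
        (convex_halfSpace_re_gt ω.re).isPreconnected
        (differentiableOn_integral_mul_cexp hφm hφ hI)
        (hG.mono fun s (hs : ω.re < s.re) => hsub (show ω.re ≤ s.re from hs.le))
        (a₀ := ω.re + 1) (by simp)
        (eventually_gt_nhds (lt_add_one ω.re) |>.mono fun a ha => h a (hω.trans ha))
    exact hopen.of_subset_closure (continuousOn_integral_mul_cexp hφm hφ hI)
      (hG.continuousOn.mono hsub) (fun s (hs : ω.re < s.re) => show ω.re ≤ s.re from hs.le)
      (Complex.closure_setOfPred_lt_re ω.re).ge (le_refl ω.re)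
  · -- Below `ω.re` the integrand is not integrable either, so `G` vanishes on `(0, ω.re)`.
    have hzero : EqOn G 0 {z | 0 < z.re} :=
      eqOn_of_eventuallyEq_ofReal (isOpen_lt continuous_const Complex.continuous_re)
        (convex_halfSpace_re_gt 0).isPreconnected hG (differentiableOn_const 0)
        (a₀ := ω.re / 2) (by simpa using half_pos hω)
        (Filter.mem_of_superset (Ioo_mem_nhds (half_pos hω) (half_lt_self hω)) fun a ha => by
          change G a = 0
          rw [← h a ha.1]
          exact integral_undef fun hIa =>
            hI (integrable_mul_cexp_of_re_le hφm hφ hIa (by simpa using ha.2.le)))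
    rw [integral_undef hI, hzero hω, Pi.zero_apply]

end LaplaceIntegral

lemma MvPolynomial.IsHomogeneous.eval_smul {R σ : Type*} [CommSemiring R] {q : MvPolynomial σ R}
    {m : ℕ} (hq : q.IsHomogeneous m) (c : R) (x : σ → R) :
    eval (c • x) q = c ^ m * eval x q := by
  rw [eval_eq, eval_eq, Finset.mul_sum]
  refine Finset.sum_congr rfl fun d hd => ?_
  have hdeg : ∑ i ∈ d.support, d i = m := by
    rw [← hq (mem_support_iff.1 hd), Finsupp.weight_apply]
    simp [Finsupp.sum]
  simp only [Pi.smul_apply, smul_eq_mul, mul_pow, Finset.prod_mul_distrib,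
    Finset.prod_pow_eq_pow_sum, hdeg]
  ring

def LowersDegreeByTwo {R σ : Type*} [CommSemiring R] (Δ : Module.End R (MvPolynomial σ R)) :
    Prop :=
  ∀ (m : ℕ) (q : MvPolynomial σ R), q.IsHomogeneous m →
    (m < 2 → Δ q = 0) ∧ (2 ≤ m → (Δ q).IsHomogeneous (m - 2))

namespace LowersDegreeByTwo

variable {R σ : Type*} [CommSemiring R] {Δ : Module.End R (MvPolynomial σ R)}
  {p : MvPolynomial σ R} {n : ℕ}

lemma isHomogeneous_pow_apply (hΔ : LowersDegreeByTwo Δ) (hp : p.IsHomogeneous n) (s : ℕ) :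
    ((Δ ^ s) p).IsHomogeneous (n - 2 * s) := by
  induction s with
  | zero => simpa using hp
  | succ s ih =>
    rw [pow_succ', Module.End.mul_apply]
    by_cases hm : n - 2 * s < 2
    · rw [(hΔ _ _ ih).1 hm]
      exact isHomogeneous_zero _ _ _
    · simpa [Nat.sub_sub, mul_add] using (hΔ _ _ ih).2 (not_lt.1 hm)

lemma pow_apply_eq_zero (hΔ : LowersDegreeByTwo Δ) (hp : p.IsHomogeneous n) {s : ℕ}
    (hs : n < 2 * s) : (Δ ^ s) p = 0 := by
  obtain ⟨s, rfl⟩ : ∃ k, s = k + 1 := Nat.exists_eq_succ_of_ne_zero (by omega)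
  rw [pow_succ', Module.End.mul_apply]
  exact (hΔ _ _ (hΔ.isHomogeneous_pow_apply hp s)).1 (by omega)

end LowersDegreeByTwo

/-- `e^{(z/4)Δ} p`, truncated after the term of order `n`; when `p` is homogeneous of degree
`n` and `Δ` lowers degrees by two, the omitted terms vanish. -/
noncomputable def heatSeries {𝕜 σ : Type*} [Field 𝕜] (Δ : Module.End 𝕜 (MvPolynomial σ 𝕜))
    (p : MvPolynomial σ 𝕜) (n : ℕ) (z : 𝕜) : MvPolynomial σ 𝕜 :=
  ∑ s ∈ Finset.range (n + 1), ((z / 4) ^ s / (Nat.factorial s : 𝕜)) • (Δ ^ s) p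

section heatSeries

variable {𝕜 σ : Type*} [Field 𝕜] {Δ : Module.End 𝕜 (MvPolynomial σ 𝕜)} {p : MvPolynomial σ 𝕜}
  {n : ℕ}

lemma eval_heatSeries (z : 𝕜) (x : σ → 𝕜) :
    eval x (heatSeries Δ p n z) =
      ∑ s ∈ Finset.range (n + 1), (z / 4) ^ s / (Nat.factorial s : 𝕜) * eval x ((Δ ^ s) p) := by
  simp only [heatSeries, map_sum, smul_eval]

lemma LowersDegreeByTwo.eval_smul_heatSeries (hΔ : LowersDegreeByTwo Δ) (hp : p.IsHomogeneous n)
    (c z : 𝕜) (x : σ → 𝕜) :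
    eval (c • x) (heatSeries Δ p n (c ^ 2 * z)) = c ^ n * eval x (heatSeries Δ p n z) := by
  simp only [eval_heatSeries, Finset.mul_sum]
  refine Finset.sum_congr rfl fun s _ => ?_
  rcases le_or_gt (2 * s) n with hs | hs
  · rw [(hΔ.isHomogeneous_pow_apply hp s).eval_smul, ← pow_mul_pow_sub c hs]
    ring
  · simp [hΔ.pow_apply_eq_zero hp hs]

end heatSeries

lemma differentiable_eval_heatSeries {σ : Type*} (Δ : Module.End ℂ (MvPolynomial σ ℂ))
    (p : MvPolynomial σ ℂ) (n : ℕ) (x : σ → ℂ) :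
    Differentiable ℂ fun z => eval x (heatSeries Δ p n z) := by
  simp only [eval_heatSeries]
  fun_prop

noncomputable def masterFormula {N : ℕ} (γ : ℝ) (Δ : Module.End ℂ (MvPolynomial (Fin N) ℂ))
    (p : MvPolynomial (Fin N) ℂ) (n : ℕ) (x : Fin N → ℂ) (z : ℂ) : ℂ :=
  z ^ (-((γ : ℂ) + (n : ℂ) + (N : ℂ) / 2)) * Complex.exp ((∑ j, (x j) ^ 2) / z) *
    eval x (heatSeries Δ p n z)

lemma differentiableOn_masterFormula {N : ℕ} (γ : ℝ) (Δ : Module.End ℂ (MvPolynomial (Fin N) ℂ))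
    (p : MvPolynomial (Fin N) ℂ) (n : ℕ) (x : Fin N → ℂ) :
    DifferentiableOn ℂ (masterFormula γ Δ p n x) {z | 0 < z.re} := by
  intro z (hz : 0 < z.re)
  have hz0 : z ≠ 0 := fun h => by simp [h] at hz
  refine DifferentiableAt.differentiableWithinAt ?_
  unfold masterFormula
  have := (differentiable_eval_heatSeries Δ p n x) z
  fun_prop (disch := first | assumption | exact Complex.mem_slitPlane_iff.2 (Or.inl hz))

section KernelIntegral

variable {N : ℕ}

noncomputable def kernelGaussianIntegrand (p : MvPolynomial (Fin N) ℂ)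
    (K : (Fin N → ℂ) → (Fin N → ℂ) → ℂ) (w : EuclideanSpace ℝ (Fin N) → ℝ) (x : Fin N → ℂ)
    (s : ℂ) (y : EuclideanSpace ℝ (Fin N)) : ℂ :=
  eval (fun j => (y j : ℂ)) p * K x (fun j => 2 * (y j : ℂ)) *
    Complex.exp (-s * (‖y‖ ^ 2 : ℝ)) * (w y : ℂ)

noncomputable def kernelGaussianIntegral (p : MvPolynomial (Fin N) ℂ)
    (K : (Fin N → ℂ) → (Fin N → ℂ) → ℂ) (w : EuclideanSpace ℝ (Fin N) → ℝ) (x : Fin N → ℂ)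
    (s : ℂ) : ℂ :=
  ∫ y, kernelGaussianIntegrand p K w x s y

variable {γ : ℝ} {n : ℕ} {p : MvPolynomial (Fin N) ℂ} {K : (Fin N → ℂ) → (Fin N → ℂ) → ℂ}
  {w : EuclideanSpace ℝ (Fin N) → ℝ}

lemma kernelGaussianIntegrand_inv_smul
    (hwhom : ∀ t : ℝ, 0 < t → ∀ y, w (t • y) = t ^ (2 * γ) * w y)
    (hK : ∀ (lam : ℂ) (x y : Fin N → ℂ), K (lam • x) y = K x (lam • y))
    (hp : p.IsHomogeneous n) {t : ℝ} (ht : 0 < t) (x : Fin N → ℂ) (s : ℂ)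
    (y : EuclideanSpace ℝ (Fin N)) :
    kernelGaussianIntegrand p K w x ((t : ℂ) ^ 2 * s) (t⁻¹ • y) =
      ((t⁻¹ ^ (2 * γ) : ℝ) : ℂ) * (t : ℂ)⁻¹ ^ n *
        kernelGaussianIntegrand p K w ((t : ℂ)⁻¹ • x) s y := by
  have ht0 : (t : ℂ) ≠ 0 := Complex.ofReal_ne_zero.2 ht.ne'
  have hcoord : (fun j => (((t⁻¹ • y) j : ℝ) : ℂ)) = (t : ℂ)⁻¹ • fun j => (y j : ℂ) := by
    ext j
    simp
  have hK' : K x (fun j => 2 * (((t⁻¹ • y) j : ℝ) : ℂ)) =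
      K ((t : ℂ)⁻¹ • x) (fun j => 2 * (y j : ℂ)) := by
    rw [hK]
    congr 1
    ext j
    rw [Pi.smul_apply, smul_eq_mul, congrFun hcoord j, Pi.smul_apply, smul_eq_mul]
    ring
  have hexp : -((t : ℂ) ^ 2 * s) * ((‖t⁻¹ • y‖ ^ 2 : ℝ) : ℂ) = -s * (‖y‖ ^ 2 : ℝ) := by
    rw [norm_smul, Real.norm_of_nonneg (inv_nonneg.2 ht.le)]
    push_cast
    field_simp
  rw [kernelGaussianIntegrand, kernelGaussianIntegrand, hcoord, hp.eval_smul, hK', hexp,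
    hwhom _ (inv_pos.2 ht)]
  push_cast
  ring

lemma kernelGaussianIntegral_sq_mul
    (hwhom : ∀ t : ℝ, 0 < t → ∀ y, w (t • y) = t ^ (2 * γ) * w y)
    (hK : ∀ (lam : ℂ) (x y : Fin N → ℂ), K (lam • x) y = K x (lam • y))
    (hp : p.IsHomogeneous n) {t : ℝ} (ht : 0 < t) (x : Fin N → ℂ) (s : ℂ) :
    kernelGaussianIntegral p K w x ((t : ℂ) ^ 2 * s) =
      ((t⁻¹ ^ (2 * γ) : ℝ) : ℂ) * (t : ℂ)⁻¹ ^ n * ((t : ℂ) ^ N)⁻¹ *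
        kernelGaussianIntegral p K w ((t : ℂ)⁻¹ • x) s := by
  have hcv := Measure.integral_comp_inv_smul_of_nonneg volume
    (kernelGaussianIntegrand p K w x ((t : ℂ) ^ 2 * s)) ht.le
  simp only [kernelGaussianIntegrand_inv_smul hwhom hK hp ht, integral_const_mul,
    finrank_euclideanSpace_fin, Complex.real_smul] at hcv
  rw [kernelGaussianIntegral, kernelGaussianIntegral, mul_right_comm, hcv]
  have ht0 : (t : ℂ) ≠ 0 := Complex.ofReal_ne_zero.2 ht.ne'
  push_cast
  field_simp

lemma ofReal_sq_cpow_neg {t : ℝ} (ht : 0 < t) (γ : ℝ) (n N : ℕ) :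
    ((t : ℂ) ^ 2) ^ (-((γ : ℂ) + (n : ℂ) + (N : ℂ) / 2)) =
      ((t⁻¹ ^ (2 * γ) : ℝ) : ℂ) * ((t : ℂ)⁻¹ ^ n) ^ 2 * ((t : ℂ) ^ N)⁻¹ := by
  have hbase : ((t : ℂ) ^ 2) = ((t ^ 2 : ℝ) : ℂ) := by push_cast; rfl
  have hexp : -((γ : ℂ) + (n : ℂ) + (N : ℂ) / 2) = ((-(γ + n + N / 2) : ℝ) : ℂ) := by
    push_cast; rfl
  rw [hbase, hexp, ← Complex.ofReal_cpow (sq_nonneg t)]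
  obtain ⟨u, rfl⟩ : ∃ u, Real.exp u = t := ⟨Real.log t, Real.exp_log ht⟩
  simp only [← Real.exp_neg, ← Real.exp_nat_mul, ← Real.exp_mul]
  push_cast
  simp only [← Complex.exp_neg, ← Complex.exp_nat_mul, ← Complex.exp_add]
  congr 1
  push_cast
  ring

theorem kernelGaussianIntegral_ofReal {c : ℝ} {Δ : Module.End ℂ (MvPolynomial (Fin N) ℂ)}
    (hwhom : ∀ t : ℝ, 0 < t → ∀ y, w (t • y) = t ^ (2 * γ) * w y)
    (hK : ∀ (lam : ℂ) (x y : Fin N → ℂ), K (lam • x) y = K x (lam • y))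
    (hΔ : LowersDegreeByTwo Δ) (hp : p.IsHomogeneous n)
    (hyp : ∀ x, (c : ℂ) * kernelGaussianIntegral p K w x 1 =
      Complex.exp (∑ j, x j ^ 2) * eval x (heatSeries Δ p n 1))
    (x : Fin N → ℂ) {a : ℝ} (ha : 0 < a) :
    (c : ℂ) * kernelGaussianIntegral p K w x a = masterFormula γ Δ p n x a := by
  obtain ⟨t, ht, rfl⟩ : ∃ t : ℝ, 0 < t ∧ t ^ 2 = a :=
    ⟨√a, Real.sqrt_pos.2 ha, Real.sq_sqrt ha.le⟩
  have ht0 : (t : ℂ) ≠ 0 := Complex.ofReal_ne_zero.2 ht.ne'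
  have hsq : ∑ j, ((t : ℂ)⁻¹ • x) j ^ 2 = (∑ j, x j ^ 2) / (t : ℂ) ^ 2 := by
    rw [div_eq_inv_mul, Finset.mul_sum]
    simp only [Pi.smul_apply, smul_eq_mul, mul_pow, inv_pow]
  have hheat : eval ((t : ℂ)⁻¹ • x) (heatSeries Δ p n 1) =
      (t : ℂ)⁻¹ ^ n * eval x (heatSeries Δ p n ((t : ℂ) ^ 2)) := by
    rw [← hΔ.eval_smul_heatSeries hp, inv_pow, inv_mul_cancel₀ (pow_ne_zero 2 ht0)]
  calc (c : ℂ) * kernelGaussianIntegral p K w x ((t ^ 2 : ℝ) : ℂ)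
      = ((t⁻¹ ^ (2 * γ) : ℝ) : ℂ) * (t : ℂ)⁻¹ ^ n * ((t : ℂ) ^ N)⁻¹ *
          ((c : ℂ) * kernelGaussianIntegral p K w ((t : ℂ)⁻¹ • x) 1) := by
        rw [Complex.ofReal_pow, ← mul_one ((t : ℂ) ^ 2),
          kernelGaussianIntegral_sq_mul hwhom hK hp ht]
        ring
    _ = masterFormula γ Δ p n x ((t ^ 2 : ℝ) : ℂ) := by
        rw [hyp, hsq, hheat, masterFormula, Complex.ofReal_pow, ofReal_sq_cpow_neg ht]
        ring

end KernelIntegral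

theorem laplace_type_integral_general (N n : ℕ) (γ : ℝ) (c : ℝ)
    (K : (Fin N → ℂ) → (Fin N → ℂ) → ℂ)
    (w : EuclideanSpace ℝ (Fin N) → ℝ)
    (hwhom : ∀ t : ℝ, 0 < t → ∀ y, w (t • y) = t ^ (2 * γ) * w y)
    (hK : ∀ (lam : ℂ) (x y : Fin N → ℂ), K (lam • x) y = K x (lam • y))
    (Δ : Module.End ℂ (MvPolynomial (Fin N) ℂ))
    (hΔ : ∀ (m : ℕ) (q : MvPolynomial (Fin N) ℂ), q.IsHomogeneous m →
      (m < 2 → Δ q = 0) ∧ (2 ≤ m → (Δ q).IsHomogeneous (m - 2)))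
    (p : MvPolynomial (Fin N) ℂ) (hp : p.IsHomogeneous n)
    (hyp : ∀ x : Fin N → ℂ,
      (c : ℂ) * ∫ y : EuclideanSpace ℝ (Fin N),
          eval (fun j => (y j : ℂ)) p * K x (fun j => 2 * (y j : ℂ)) *
            (Real.exp (-‖y‖ ^ 2) : ℂ) * (w y : ℂ)
        = Complex.exp (∑ j, (x j) ^ 2) *
          eval x (∑ s ∈ Finset.range (n + 1),
            (((1 : ℂ) / 4) ^ s / (Nat.factorial s : ℂ)) • (Δ ^ s) p))
    (ω : ℂ) (hω : 0 < ω.re) :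
    ∀ x : Fin N → ℂ,
      (c : ℂ) * ∫ y : EuclideanSpace ℝ (Fin N),
          eval (fun j => (y j : ℂ)) p * K x (fun j => 2 * (y j : ℂ)) *
            Complex.exp (-ω * (‖y‖ ^ 2 : ℝ)) * (w y : ℂ)
        = ω ^ (-((γ : ℂ) + (n : ℂ) + (N : ℂ) / 2)) *
          Complex.exp ((∑ j, (x j) ^ 2) / ω) *
          eval x (∑ s ∈ Finset.range (n + 1),
            ((ω / 4) ^ s / (Nat.factorial s : ℂ)) • (Δ ^ s) p) := by
  intro x
  have hyp₁ : ∀ x, (c : ℂ) * kernelGaussianIntegral p K w x 1 =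
      Complex.exp (∑ j, x j ^ 2) * eval x (heatSeries Δ p n 1) := fun x => by
    rw [heatSeries, ← hyp x, kernelGaussianIntegral]
    simp [kernelGaussianIntegrand, Complex.ofReal_exp]
  have hg : ∀ s : ℂ, (c : ℂ) * kernelGaussianIntegral p K w x s =
      ∫ y : EuclideanSpace ℝ (Fin N), (c * (eval (fun j => (y j : ℂ)) p *
        K x (fun j => 2 * (y j : ℂ)) * (w y : ℂ))) * Complex.exp (-s * (‖y‖ ^ 2 : ℝ)) :=
    fun s => by
      rw [kernelGaussianIntegral, ← integral_const_mul]
      congr 1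
      ext y
      rw [kernelGaussianIntegrand]
      ring
  change (c : ℂ) * kernelGaussianIntegral p K w x ω = masterFormula γ Δ p n x ω
  rw [hg]
  exact integral_mul_cexp_eq_of_eq_ofReal (φ := fun y => ‖y‖ ^ 2) (by fun_prop)
    (fun y => sq_nonneg _) (differentiableOn_masterFormula γ Δ p n x)
    (fun a ha => (hg a).symm.trans (kernelGaussianIntegral_ofReal hwhom hK hΔ hp hyp₁ x ha)) hω

/-- Laplace-type integral evaluation underlying the master formula: from the
`ω = 1` identity, rescaling (for `Δ` lowering homogeneous degree by `2`,
`w` homogeneous of degree `2γ`, and `K(λx,y) = K(x,λy)`) yields the identity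
for all `ω` with `Re ω > 0`. -/
theorem laplace_type_integral (N n : ℕ) (γ : ℝ) (c : ℝ) (hc : 0 < c)
    (K : (Fin N → ℂ) → (Fin N → ℂ) → ℂ)
    (w : EuclideanSpace ℝ (Fin N) → ℝ) (hw : ∀ y, 0 ≤ w y)
    (hwhom : ∀ t : ℝ, 0 < t → ∀ y, w (t • y) = t ^ (2 * γ) * w y)
    (hK : ∀ (lam : ℂ) (x y : Fin N → ℂ), K (lam • x) y = K x (lam • y))
    (Δ : Module.End ℂ (MvPolynomial (Fin N) ℂ))
    (hΔ : ∀ (m : ℕ) (q : MvPolynomial (Fin N) ℂ), q.IsHomogeneous m →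
      (m < 2 → Δ q = 0) ∧ (2 ≤ m → (Δ q).IsHomogeneous (m - 2)))
    (p : MvPolynomial (Fin N) ℂ) (hp : p.IsHomogeneous n)
    (hyp : ∀ x : Fin N → ℂ,
      (c : ℂ) * ∫ y : EuclideanSpace ℝ (Fin N),
          eval (fun j => (y j : ℂ)) p * K x (fun j => 2 * (y j : ℂ)) *
            (Real.exp (-‖y‖ ^ 2) : ℂ) * (w y : ℂ)
        = Complex.exp (∑ j, (x j) ^ 2) *
          eval x (∑ s ∈ Finset.range (n + 1),
            (((1 : ℂ) / 4) ^ s / (Nat.factorial s : ℂ)) • (Δ ^ s) p))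
    (ω : ℂ) (hω : 0 < ω.re) :
    ∀ x : Fin N → ℂ,
      (c : ℂ) * ∫ y : EuclideanSpace ℝ (Fin N),
          eval (fun j => (y j : ℂ)) p * K x (fun j => 2 * (y j : ℂ)) *
            Complex.exp (-ω * (‖y‖ ^ 2 : ℝ)) * (w y : ℂ)
        = ω ^ (-((γ : ℂ) + (n : ℂ) + (N : ℂ) / 2)) *
          Complex.exp ((∑ j, (x j) ^ 2) / ω) *
          eval x (∑ s ∈ Finset.range (n + 1),
            ((ω / 4) ^ s / (Nat.factorial s : ℂ)) • (Δ ^ s) p) :=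
  laplace_type_integral_general N n γ c K w hwhom hK Δ hΔ p hp hyp ω hω
end
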